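/- arXiv:1807.07615 — 5 statements merged into one kernel-verified Lean document; each statement's English description precedes it below -/
import Mathlib

section
/- Let $\nu_i \ge 0$ and let $(h_{j \to i}(-s))_{(j,s) \in I \times \mathbb{Z}_-}$ be summably absolutely convergent real numbers with $\Sigma_i^+ = \sum_{(j,s): h_{j\to i}(-s) > 0} h_{j\to i}(-s)$ and $\Sigma_i^- = \sum_{(j,s): h_{j\to i}(-s) < 0} |h_{j\to i}(-s)|$. Assume $0 \le \nu_i - \Sigma_i^-$ and $\nu_i + \Sigma_i^+ \le 1$. Then for every $x \in \{0,1\}^{I \times \mathbb{Z}_-}$, the linear Hawkes intensity $\psi_i(x) = \nu_i + \sum_{s,j} h_{j\to i}(-s) x_{j,s}$ satisfies $\psi_i(x) \in [0,1]$, and it admits the decomposition $\psi_i(x) = \lambda_i(\emptyset) p_i^{\emptyset} + \sum_{(j,s): h_{j\to i}(-s)>0} |h_{j\to i}(-s)| x_{j,s} + \sum_{(j,s): h_{j\to i}(-s)<0} |h_{j\to i}(-s)| (1 - x_{j,s})$, where $\lambda_i(\emptyset) = 1 - (\Sigma_i^+ + \Sigma_i^-) \ge 0$ and $p_i^{\emptyset}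 = \frac{\nu_i - \Sigma_i^-}{\lambda_i(\emptyset)} \in [0,1]$ (when $\lambda_i(\emptyset) > 0$). Moreover the weights $\lambda_i(\emptyset)$ and $\lambda_i(\{(j,s)\}) = |h_{j\to i}(-s)|$ sum to 1. -/
open Classical in
/-- Kalikow space-time decomposition of the discrete-time linear Hawkes intensity. -/
theorem stmt4 {I : Type*} (ν : ℝ) (hν : 0 ≤ ν) (h : I × ℤ → ℝ)
    (hsum : Summable fun p => |h p|)
    (Sp Sm lam0 : ℝ)
    (hSp : Sp = ∑' p, max (h p) 0) (hSm : Sm = ∑' p, max (-h p) 0)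
    (h1 : 0 ≤ ν - Sm) (h2 : ν + Sp ≤ 1)
    (hlam0 : lam0 = 1 - (Sp + Sm)) :
    (∀ x : I × ℤ → ℝ, (∀ p, x p = 0 ∨ x p = 1) →
      0 ≤ ν + ∑' p, h p * x p ∧ ν + ∑' p, h p * x p ≤ 1) ∧
    0 ≤ lam0 ∧
    (lam0 + ∑' p, |h p| = 1) ∧
    (0 < lam0 →
      (0 ≤ (ν - Sm) / lam0 ∧ (ν - Sm) / lam0 ≤ 1) ∧
      ∀ x : I × ℤ → ℝ, (∀ p, x p = 0 ∨ x p = 1) →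
        ν + ∑' p, h p * x p
          = lam0 * ((ν - Sm) / lam0)
            + (∑' p, if 0 < h p then |h p| * x p else 0)
            + (∑' p, if h p < 0 then |h p| * (1 - x p) else 0)) := by
  have hSpS : Summable fun p => max (h p) 0 :=
    hsum.of_nonneg_of_le (fun p => le_max_right _ _)
      (fun p => max_le (le_abs_self _) (abs_nonneg _))
  have hSmS : Summable fun p => max (-h p) 0 :=
    hsum.of_nonneg_of_le (fun p => le_max_right _ _)
      (fun p => max_le (neg_le_abs _) (abs_nonneg _))
  have habs : ∀ p, |h p| = max (h p) 0 + max (-h p) 0 := by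
    intro p
    rcases le_total 0 (h p) with hp | hp
    · rw [abs_of_nonneg hp, max_eq_left hp, max_eq_right (neg_nonpos_of_nonneg hp), add_zero]
    · rw [abs_of_nonpos hp, max_eq_right hp, max_eq_left (neg_nonneg_of_nonpos hp), zero_add]
  have htsumabs : (∑' p, |h p|) = Sp + Sm := by
    rw [hSp, hSm, ← Summable.tsum_add hSpS hSmS]
    exact tsum_congr habs
  -- summability of h*x for 0/1-valued x
  have hxsum : ∀ x : I × ℤ → ℝ, (∀ p, x p = 0 ∨ x p = 1) →
      Summable fun p => h p * x p := by
    intro x hx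
    refine Summable.of_abs (hsum.of_nonneg_of_le (fun p => abs_nonneg _) fun p => ?_)
    rcases hx p with h0 | h0 <;> simp [h0, abs_nonneg]
  have hbound : ∀ x : I × ℤ → ℝ, (∀ p, x p = 0 ∨ x p = 1) →
      0 ≤ ν + ∑' p, h p * x p ∧ ν + ∑' p, h p * x p ≤ 1 := by
    intro x hx
    have hs := hxsum x hx
    have hub : (∑' p, h p * x p) ≤ Sp := by
      rw [hSp]
      refine Summable.tsum_le_tsum (fun p => ?_) hs hSpS
      rcases hx p with h0 | h0 <;> simp [h0, le_max_left, le_max_right]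
    have hlb : -Sm ≤ ∑' p, h p * x p := by
      rw [hSm, ← tsum_neg]
      refine Summable.tsum_le_tsum (fun p => ?_) hSmS.neg hs
      rcases hx p with h0 | h0
      · simp [h0]
      · simp only [h0, mul_one]
        rcases le_total 0 (h p) with hp | hp
        · calc -max (-h p) 0 ≤ 0 := neg_nonpos_of_nonneg (le_max_right _ _)
            _ ≤ h p := hp
        · rw [max_eq_left (neg_nonneg_of_nonpos hp), neg_neg]
    constructor
    · linarith
    · linarith
  have hSmnn : 0 ≤ Sm := hSm ▸ tsum_nonneg fun p => le_max_right _ _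
  have hSpnn : 0 ≤ Sp := hSp ▸ tsum_nonneg fun p => le_max_right _ _
  refine ⟨hbound, by linarith, by rw [htsumabs]; linarith, fun hpos => ?_⟩
  constructor
  · constructor
    · exact div_nonneg h1 hpos.le
    · rw [div_le_one hpos]; linarith
  · intro x hx
    have hs := hxsum x hx
    have hfS : Summable fun p => if 0 < h p then |h p| * x p else 0 := by
      refine hsum.of_nonneg_of_le (fun p => ?_) (fun p => ?_)
      · split
        · rcases hx p with h0 | h0 <;> simp [h0, abs_nonneg]
        · exact le_rfl
      · split
        · rcases hx p with h0 | h0 <;> simp [h0, abs_nonneg]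
        · exact abs_nonneg _
    have hgS : Summable fun p => if h p < 0 then |h p| * (1 - x p) else 0 := by
      refine hsum.of_nonneg_of_le (fun p => ?_) (fun p => ?_)
      · split
        · rcases hx p with h0 | h0 <;> simp [h0, abs_nonneg]
        · exact le_rfl
      · split
        · rcases hx p with h0 | h0 <;> simp [h0, abs_nonneg]
        · exact abs_nonneg _
    have key : (∑' p, h p * x p) + Sm
        = (∑' p, if 0 < h p then |h p| * x p else 0)
          + (∑' p, if h p < 0 then |h p| * (1 - x p) else 0) := by
      rw [hSm, ← Summable.tsum_add hs hSmS, ← Summable.tsum_add hfS hgS]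
      refine tsum_congr fun p => ?_
      rcases lt_trichotomy (h p) 0 with hp | hp | hp
      · rw [if_neg (by linarith), if_pos hp, max_eq_left (neg_nonneg_of_nonpos hp.le),
          abs_of_neg hp]
        ring
      · simp [hp]
      · rw [if_pos hp, if_neg (by linarith), max_eq_right (by linarith),
          abs_of_pos hp]
    have hl : lam0 * ((ν - Sm) / lam0) = ν - Sm := by
      field_simp
    rw [hl]
    linarith [key]
end

section
/- Let $G \in \mathbb{R}^{n \times n}$ be symmetric positive semidefinite, $b, \bar{b} \in \mathbb{R}^n$, $\gamma \ge 2$, $d > 0$, and let $\hat{a}$ minimize $a \mapsto a^\top G a - 2 a^\top b + \gamma d |a|_1$. Fix $a \in \mathbb{R}^n$ with support $S(a) = \{\varphi : a_\varphi \ne 0\}$. Suppose (i) $(\hat{a}-a)^\top(G\hat{a} - \bar{b}) \ge 0$ and (ii) $|b_\varphi - \bar{b}_\varphi| \le d$ for all $\varphi$. Then $|\hat{a}_{S(a)^c}|_1 \le \frac{\gamma+2}{\gamma-2} |\hat{a}_{S(a)} - a_{S(a)}|_1$ (interpreting the right side as valid when $\gamma > 2$). -/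
/-!
Since `â` minimises `x ↦ xᵀGx - 2xᵀb + γd|x|₁`, its one-sided directional derivative towards `a`
is nonnegative; as `|·|₁` is convex and `G` symmetric, this reads
`0 ≤ 2 (a - â)ᵀ(Gâ - b) + γd (|a|₁ - |â|₁)`. Adding hypothesis (i) replaces `b` by `b̄`, and the
difference is at most `d |â - a|₁` by (ii), which gives `γ |â|₁ ≤ γ |a|₁ + 2 |â - a|₁`. Splitting
the `ℓ¹` norms along the support `S` of `a` and using `|a_S|₁ ≤ |â_S|₁ + |â_S - a_S|₁` leaves
`(γ - 2) |â_{Sᶜ}|₁ ≤ (γ + 2) |â_S - a_S|₁`.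
-/

open Matrix Filter Topology

variable {ι : Type*} [Fintype ι]

noncomputable def lassoObjective (G : Matrix ι ι ℝ) (b : ι → ℝ) (r : ℝ) (x : ι → ℝ) : ℝ :=
  x ⬝ᵥ (G *ᵥ x) - 2 * (x ⬝ᵥ b) + r * ∑ i, |x i|

theorem Matrix.IsSymm.dotProduct_mulVec_comm {G : Matrix ι ι ℝ} (hG : G.IsSymm) (x y : ι → ℝ) :
    x ⬝ᵥ (G *ᵥ y) = y ⬝ᵥ (G *ᵥ x) := by
  rw [← dotProduct_transpose_mulVec, hG.eq]

theorem Matrix.IsSymm.dotProduct_mulVec_add_smul {G : Matrix ι ι ℝ} (hG : G.IsSymm)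
    (x v : ι → ℝ) (t : ℝ) :
    (x + t • v) ⬝ᵥ (G *ᵥ (x + t • v))
      = x ⬝ᵥ (G *ᵥ x) + 2 * t * (v ⬝ᵥ (G *ᵥ x)) + t ^ 2 * (v ⬝ᵥ (G *ᵥ v)) := by
  simp only [mulVec_add, mulVec_smul, dotProduct_add, add_dotProduct, dotProduct_smul,
    smul_dotProduct, smul_eq_mul, hG.dotProduct_mulVec_comm x v]
  ring

theorem sum_abs_add_smul_sub_le (x y : ι → ℝ) {t : ℝ} (ht₀ : 0 ≤ t) (ht₁ : t ≤ 1) :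
    ∑ i, |(x + t • (y - x)) i| ≤ (1 - t) * ∑ i, |x i| + t * ∑ i, |y i| := by
  rw [Finset.mul_sum, Finset.mul_sum, ← Finset.sum_add_distrib]
  refine Finset.sum_le_sum fun i _ => ?_
  calc |(x + t • (y - x)) i| = |(1 - t) * x i + t * y i| := by
        simp only [Pi.add_apply, Pi.smul_apply, Pi.sub_apply, smul_eq_mul]; ring_nf
    _ ≤ |(1 - t) * x i| + |t * y i| := abs_add_le _ _
    _ = (1 - t) * |x i| + t * |y i| := by
        rw [abs_mul, abs_mul, abs_of_nonneg (sub_nonneg.2 ht₁), abs_of_nonneg ht₀]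

theorem lassoObjective_add_smul_sub_le {G : Matrix ι ι ℝ} (hG : G.IsSymm) (b : ι → ℝ) {r : ℝ}
    (hr : 0 ≤ r) (x y : ι → ℝ) {t : ℝ} (ht₀ : 0 ≤ t) (ht₁ : t ≤ 1) :
    lassoObjective G b r (x + t • (y - x)) ≤ lassoObjective G b r x
      + t * (2 * ((y - x) ⬝ᵥ (G *ᵥ x - b)) + r * (∑ i, |y i| - ∑ i, |x i|))
      + t ^ 2 * ((y - x) ⬝ᵥ (G *ᵥ (y - x))) := by
  have hl1 := mul_le_mul_of_nonneg_left (sum_abs_add_smul_sub_le x y ht₀ ht₁) hr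
  rw [lassoObjective, hG.dotProduct_mulVec_add_smul, add_dotProduct, smul_dotProduct,
    smul_eq_mul, dotProduct_sub, lassoObjective]
  linarith

theorem nonneg_of_forall_nonneg_add_mul {c q : ℝ} (h : ∀ t ∈ Set.Ioc (0 : ℝ) 1, 0 ≤ c + t * q) :
    0 ≤ c := by
  have hlim : Tendsto (fun t : ℝ => c + t * q) (𝓝[>] 0) (𝓝 c) := by
    refine (Continuous.tendsto' ?_ 0 c (by simp)).mono_left nhdsWithin_le_nhds
    fun_prop
  refine ge_of_tendsto hlim ?_
  filter_upwards [Ioo_mem_nhdsGT one_pos] with t ht using h t (Set.Ioo_subset_Ioc_self ht)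

theorem lassoObjective_variational_ineq {G : Matrix ι ι ℝ} (hG : G.IsSymm) {b : ι → ℝ} {r : ℝ}
    (hr : 0 ≤ r) {x : ι → ℝ} (hx : ∀ y, lassoObjective G b r x ≤ lassoObjective G b r y)
    (y : ι → ℝ) :
    0 ≤ 2 * ((y - x) ⬝ᵥ (G *ᵥ x - b)) + r * (∑ i, |y i| - ∑ i, |x i|) := by
  refine nonneg_of_forall_nonneg_add_mul (q := (y - x) ⬝ᵥ (G *ᵥ (y - x))) fun t ⟨ht₀, ht₁⟩ => ?_
  have hle := (hx _).trans (lassoObjective_add_smul_sub_le hG b hr x y ht₀.le ht₁)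
  have hprod : 0 ≤ t * (2 * ((y - x) ⬝ᵥ (G *ᵥ x - b)) + r * (∑ i, |y i| - ∑ i, |x i|)
      + t * ((y - x) ⬝ᵥ (G *ᵥ (y - x)))) := by linarith
  exact nonneg_of_mul_nonneg_right hprod ht₀

theorem abs_dotProduct_le_mul_sum_abs {v w : ι → ℝ} {d : ℝ} (hw : ∀ i, |w i| ≤ d) :
    |v ⬝ᵥ w| ≤ d * ∑ i, |v i| := by
  rw [Finset.mul_sum]
  refine (Finset.abs_sum_le_sum_abs _ _).trans (Finset.sum_le_sum fun i _ => ?_)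
  rw [abs_mul, mul_comm]
  exact mul_le_mul_of_nonneg_right (hw i) (abs_nonneg _)

theorem lasso_mul_sum_abs_le {G : Matrix ι ι ℝ} (hG : G.IsSymm) {b bbar : ι → ℝ} {γ d : ℝ}
    (hγ : 0 ≤ γ) (hd : 0 < d) {x : ι → ℝ}
    (hx : ∀ y, lassoObjective G b (γ * d) x ≤ lassoObjective G b (γ * d) y) (a : ι → ℝ)
    (hi : 0 ≤ (x - a) ⬝ᵥ (G *ᵥ x - bbar)) (hii : ∀ i, |b i - bbar i| ≤ d) :
    γ * ∑ i, |x i| ≤ γ * ∑ i, |a i| + 2 * ∑ i, |x i - a i| := by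
  have hopt := lassoObjective_variational_ineq hG (by positivity) hx a
  have hnoise : |(x - a) ⬝ᵥ (bbar - b)| ≤ d * ∑ i, |x i - a i| :=
    abs_dotProduct_le_mul_sum_abs fun i => by rw [Pi.sub_apply, abs_sub_comm]; exact hii i
  have hsplit : (a - x) ⬝ᵥ (G *ᵥ x - b)
      = -((x - a) ⬝ᵥ (G *ᵥ x - bbar)) - (x - a) ⬝ᵥ (bbar - b) := by
    rw [← neg_sub x a, neg_dotProduct, neg_sub_left, ← dotProduct_add, add_comm,
      sub_add_sub_cancel]
  rw [hsplit] at hopt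
  have hscaled : d * (γ * ∑ i, |x i|) ≤ d * (γ * ∑ i, |a i| + 2 * ∑ i, |x i - a i|) := by
    linarith [(abs_le.1 hnoise).1]
  exact le_of_mul_le_mul_left hscaled hd

open Classical in
theorem sum_abs_filter_eq_zero_le {x a : ι → ℝ} {γ : ℝ} (hγ : 2 < γ)
    (h : γ * ∑ i, |x i| ≤ γ * ∑ i, |a i| + 2 * ∑ i, |x i - a i|) :
    ∑ i ∈ Finset.univ.filter (fun i => a i = 0), |x i|
      ≤ (γ + 2) / (γ - 2) * ∑ i ∈ Finset.univ.filter (fun i => a i ≠ 0), |x i - a i| := by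
  set Z := Finset.univ.filter (fun i => a i = 0)
  set S := Finset.univ.filter (fun i => a i ≠ 0)
  have hsplit (f : ι → ℝ) : ∑ i, f i = ∑ i ∈ Z, f i + ∑ i ∈ S, f i :=
    (Finset.sum_filter_add_sum_filter_not _ _ _).symm
  have hx := hsplit fun i => |x i|
  have ha : ∑ i, |a i| = ∑ i ∈ S, |a i| := by
    rw [hsplit, Finset.sum_eq_zero fun i hi => by rw [(Finset.mem_filter.1 hi).2, abs_zero],
      zero_add]
  have hxa : ∑ i, |x i - a i| = ∑ i ∈ Z, |x i| + ∑ i ∈ S, |x i - a i| := by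
    rw [hsplit]
    congr 1
    exact Finset.sum_congr rfl fun i hi => by rw [(Finset.mem_filter.1 hi).2, sub_zero]
  have htri : ∑ i ∈ S, |a i| ≤ ∑ i ∈ S, |x i| + ∑ i ∈ S, |x i - a i| := by
    rw [← Finset.sum_add_distrib]
    exact Finset.sum_le_sum fun i _ => by
      linarith [abs_sub_comm (a i) (x i), abs_sub_abs_le_abs_sub (a i) (x i)]
  rw [div_mul_eq_mul_div, le_div_iff₀ (by linarith)]
  nlinarith

open Classical in
theorem stmt7_general {n : ℕ} (G : Matrix (Fin n) (Fin n) ℝ) (hsym : G.IsSymm)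
    (b bbar : Fin n → ℝ) (γ d : ℝ) (hγ : 2 < γ) (hd : 0 < d)
    (ahat : Fin n → ℝ)
    (hmin : ∀ a : Fin n → ℝ,
      ahat ⬝ᵥ (G *ᵥ ahat) - 2 * (ahat ⬝ᵥ b) + γ * d * (∑ i, |ahat i|)
        ≤ a ⬝ᵥ (G *ᵥ a) - 2 * (a ⬝ᵥ b) + γ * d * (∑ i, |a i|))
    (a : Fin n → ℝ)
    (hi : 0 ≤ (ahat - a) ⬝ᵥ (G *ᵥ ahat - bbar))
    (hii : ∀ i, |b i - bbar i| ≤ d) :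
    ∑ i ∈ Finset.univ.filter (fun i => a i = 0), |ahat i|
      ≤ (γ + 2) / (γ - 2) * ∑ i ∈ Finset.univ.filter (fun i => a i ≠ 0), |ahat i - a i| :=
  sum_abs_filter_eq_zero_le hγ (lasso_mul_sum_abs_le hsym (by linarith) hd hmin a hi hii)

open Classical in
/-- The cone condition for the Lasso minimizer (Lemma 2). -/
theorem stmt7 {n : ℕ} (G : Matrix (Fin n) (Fin n) ℝ) (hsym : G.IsSymm)
    (hpsd : ∀ u : Fin n → ℝ, 0 ≤ u ⬝ᵥ (G *ᵥ u))
    (b bbar : Fin n → ℝ) (γ d : ℝ) (hγ : 2 < γ) (hd : 0 < d)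
    (ahat : Fin n → ℝ)
    (hmin : ∀ a : Fin n → ℝ,
      ahat ⬝ᵥ (G *ᵥ ahat) - 2 * (ahat ⬝ᵥ b) + γ * d * (∑ i, |ahat i|)
        ≤ a ⬝ᵥ (G *ᵥ a) - 2 * (a ⬝ᵥ b) + γ * d * (∑ i, |a i|))
    (a : Fin n → ℝ)
    (hi : 0 ≤ (ahat - a) ⬝ᵥ (G *ᵥ ahat - bbar))
    (hii : ∀ i, |b i - bbar i| ≤ d) :
    ∑ i ∈ Finset.univ.filter (fun i => a i = 0), |ahat i|
      ≤ (γ + 2) / (γ - 2) * ∑ i ∈ Finset.univ.filter (fun i => a i ≠ 0), |ahat i - a i| :=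
  stmt7_general G hsym b bbar γ d hγ hd ahat hmin a hi hii
end

section
/- Let $\eta > 0$, $N \in \mathbb{N}$ (with $N = K|F|$), and consider the $(1+N) \times (1+N)$ symmetric block matrix $M = \begin{pmatrix} 1 & (\eta/2)\mathbf{1}^\top \\ (\eta/2)\mathbf{1} & (\eta/4) I_N + (\eta^2/4)\mathbf{1}\mathbf{1}^\top \end{pmatrix}$. Then for all $(\mu, a) \in \mathbb{R} \times \mathbb{R}^N$, $(\mu, a)^\top M (\mu, a) = (\mu + \frac{\eta}{2}\sum_i a_i)^2 + \frac{\eta}{4}\|a\|^2$, and the smallest eigenvalue of $M$ is at least $\min\left(\frac{1}{1 + 2\eta N}, \frac{\eta}{8}\right)$. -/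
open Matrix

/-- Quadratic form and smallest-eigenvalue bound for the expected Gram matrix of the
cumulative-effect dictionary with spontaneous apparition. -/
theorem stmt12 (η : ℝ) (hη : 0 < η) (N : ℕ)
    (M : Matrix (Unit ⊕ Fin N) (Unit ⊕ Fin N) ℝ)
    (hM : ∀ i j, M i j =
      match i, j with
      | Sum.inl _, Sum.inl _ => 1
      | Sum.inl _, Sum.inr _ => η / 2
      | Sum.inr _, Sum.inl _ => η / 2
      | Sum.inr p, Sum.inr q => (if p = q then η / 4 else 0) + η ^ 2 / 4) :
    ∀ (μ : ℝ) (a : Fin N → ℝ),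
      (Sum.elim (fun _ => μ) a) ⬝ᵥ (M *ᵥ Sum.elim (fun _ => μ) a)
        = (μ + η / 2 * ∑ i, a i) ^ 2 + η / 4 * ∑ i, (a i) ^ 2 ∧
      min (1 / (1 + 2 * η * N)) (η / 8) * (μ ^ 2 + ∑ i, (a i) ^ 2)
        ≤ (Sum.elim (fun _ => μ) a) ⬝ᵥ (M *ᵥ Sum.elim (fun _ => μ) a) := by
  intro μ a
  have key : (Sum.elim (fun _ => μ) a) ⬝ᵥ (M *ᵥ Sum.elim (fun _ => μ) a)
      = (μ + η / 2 * ∑ i, a i) ^ 2 + η / 4 * ∑ i, (a i) ^ 2 := by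
    simp only [dotProduct, mulVec, Fintype.sum_sum_type, Sum.elim_inl, Sum.elim_inr, hM,
      Finset.univ_unique, Finset.sum_singleton]
    simp only [add_mul, ite_mul, zero_mul, Finset.sum_add_distrib, Finset.sum_ite_eq,
      Finset.mem_univ, if_true, mul_add, Finset.mul_sum]
    rw [add_sq, sq (∑ x : Fin N, η / 2 * a x), Finset.sum_mul_sum, Finset.mul_sum]
    have h0 : μ * (1 * μ) = μ ^ 2 := by ring
    have h2 : (∑ x : Fin N, a x * (η / 2 * μ)) = ∑ x : Fin N, μ * (η / 2 * a x) :=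
      Finset.sum_congr rfl fun i _ => by ring
    have h3 : (∑ x : Fin N, a x * (η / 4 * a x)) = ∑ i : Fin N, η / 4 * a i ^ 2 :=
      Finset.sum_congr rfl fun i _ => by ring
    have h4 : (∑ x : Fin N, ∑ i : Fin N, a x * (η ^ 2 / 4 * a i))
        = ∑ x : Fin N, ∑ j : Fin N, η / 2 * a x * (η / 2 * a j) :=
      Finset.sum_congr rfl fun i _ => Finset.sum_congr rfl fun j _ => by ring
    have h5 : (∑ x : Fin N, 2 * μ * (η / 2 * a x))
        = (∑ x : Fin N, μ * (η / 2 * a x)) + ∑ x : Fin N, μ * (η / 2 * a x) := by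
      rw [← Finset.sum_add_distrib]; exact Finset.sum_congr rfl fun i _ => by ring
    linarith [h0, h2, h3, h4, h5]
  refine ⟨key, ?_⟩
  rw [key]
  set S := ∑ i, a i with hS
  set T := ∑ i, (a i) ^ 2 with hT
  have hc : (0:ℝ) < 1 + 2 * η * N := by positivity
  have hT0 : 0 ≤ T := Finset.sum_nonneg fun i _ => sq_nonneg _
  have hS2 : S ^ 2 ≤ N * T := by
    simpa [hS, hT] using sq_sum_le_card_mul_sum_sq (s := Finset.univ) (f := a)
  have hN0 : (0:ℝ) ≤ N := Nat.cast_nonneg N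
  have hcore2 : μ ^ 2 + (1 + 2 * η * N) * (η / 8 * T)
      ≤ (1 + 2 * η * N) * ((μ + η / 2 * S) ^ 2 + η / 4 * T) := by
    rcases Nat.eq_zero_or_pos N with h0 | h0
    · have hSz : S = 0 := by
        have : S ^ 2 ≤ 0 := by simpa [h0] using hS2
        nlinarith [sq_nonneg S]
      subst h0
      simp only [Nat.cast_zero, hSz]
      nlinarith [hT0, hη]
    · have hN1 : (1:ℝ) ≤ N := by exact_mod_cast h0
      nlinarith [sq_nonneg (4 * (N:ℝ) * μ + (1 + 2 * η * N) * S),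
        mul_nonneg (mul_pos hc hη).le (sub_nonneg.2 hS2), hT0, hη, hN1,
        mul_nonneg hη.le hT0]
  have hcore : 1 / (1 + 2 * η * N) * μ ^ 2 + η / 8 * T
      ≤ (μ + η / 2 * S) ^ 2 + η / 4 * T := by
    have h1 : 1 / (1 + 2 * η * N) * μ ^ 2
        ≤ (μ + η / 2 * S) ^ 2 + η / 4 * T - η / 8 * T := by
      rw [div_mul_eq_mul_div, one_mul, div_le_iff₀ hc]
      nlinarith [hcore2]
    linarith
  have hm1 := mul_le_mul_of_nonneg_right
    (min_le_left (1 / (1 + 2 * η * N)) (η / 8)) (sq_nonneg μ)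
  have hm2 := mul_le_mul_of_nonneg_right
    (min_le_right (1 / (1 + 2 * η * N)) (η / 8)) hT0
  nlinarith [hm1, hm2, hcore]
end

section
/- Let $I$ be countable, $0 < \mu \le 1/2$, and let $P$ be the law of a stochastic chain $(X_{i,t})_{i \in I, t \in \mathbb{Z}}$ with values in $\{0,1\}$ such that, given the past, coordinates at each time are conditionally independent and each conditional spiking probability $p_i(x)$ satisfies $\mu \le p_i(x) \le 1 - \mu$. Then for every finite set $v \subset I \times \mathbb{Z}$ and every nonnegative function $f$ of $X_v$, $(2\mu)^{|v|} \, E_Q[f(X_v)] \le E_P[f(X_v)] \le (2(1-\mu))^{|v|} \, E_Q[f(X_v)]$, where $Q$ is the measure under which all $X_{i,t}$ are i.i.d. Bernoulli(1/2). -/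
open MeasureTheory Set

/-!
Write `v` as its latest time slice `w` (time `t`) and the rest `u`, whose cylinder event is
measurable with respect to the past before `t`. Given that past, the coordinates of the slice are
independent and each takes its prescribed value with probability in `[μ, 1 - μ]`, so the slice
pattern has conditional probability in `[μ ^ |w|, (1 - μ) ^ |w|]`; integrating over the cylinder
of `u` and inducting gives `P(X_v = b) ∈ [μ ^ |v|, (1 - μ) ^ |v|]` for every pattern `b`. Under the
uniform measure every pattern has probability `2 ^ (-|v|)`, and summing over patterns concludes.
-/

section General

variable {Ω ι : Type*}

lemma measurableSet_cylinder {β : Type*} [MeasurableSpace β] [MeasurableSingletonClass β]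
    {m : MeasurableSpace Ω} {X : ι → Ω → β} (v : Finset ι) (hX : ∀ p ∈ v, Measurable[m] (X p))
    (b : ι → β) : MeasurableSet[m] {ω | ∀ p ∈ v, X p ω = b p} := by
  simp only [ofPred_forall]
  exact MeasurableSet.biInter v.countable_toSet fun p hp => hX p hp (measurableSet_singleton _)

noncomputable def condProb {m0 : MeasurableSpace Ω} (P : Measure Ω) (m : MeasurableSpace Ω)
    (s : Set Ω) : Ω → ℝ :=
  P[s.indicator fun _ => (1 : ℝ) | m]

variable {m m0 : MeasurableSpace Ω} {P : Measure Ω} [IsFiniteMeasure P]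

lemma condProb_compl (hm : m ≤ m0) {s : Set Ω} (hs : MeasurableSet s) :
    condProb P m sᶜ =ᵐ[P] fun ω => 1 - condProb P m s ω := by
  unfold condProb
  rw [indicator_compl]
  filter_upwards [condExp_sub (integrable_const (1 : ℝ)) ((integrable_const 1).indicator hs) m]
    with ω hω
  rw [hω, Pi.sub_apply, condExp_const hm]

lemma measureReal_inter_eq_setIntegral_condProb (hm : m ≤ m0) {A B : Set Ω}
    (hA : MeasurableSet[m] A) (hB : MeasurableSet B) :
    P.real (A ∩ B) = ∫ ω in A, condProb P m B ω ∂P := by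
  rw [condProb, setIntegral_condExp hm ((integrable_const 1).indicator hB) hA,
    setIntegral_indicator hB, setIntegral_const, smul_eq_mul, mul_one]

lemma measureReal_inter_mem_Icc_of_condProb (hm : m ≤ m0) {A B : Set Ω}
    (hA : MeasurableSet[m] A) (hB : MeasurableSet B) {a b : ℝ}
    (h : ∀ᵐ ω ∂P, condProb P m B ω ∈ Icc a b) :
    P.real (A ∩ B) ∈ Icc (a * P.real A) (b * P.real A) := by
  have hint : IntegrableOn (condProb P m B) A P := integrable_condExp.integrableOn
  have hconst (c : ℝ) : c * P.real A = ∫ _ in A, c ∂P := by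
    rw [setIntegral_const, smul_eq_mul, mul_comm]
  rw [measureReal_inter_eq_setIntegral_condProb hm hA hB, hconst, hconst]
  exact ⟨setIntegral_mono_ae_restrict (integrableOn_const (measure_ne_top _ _)) hint
      (ae_restrict_of_ae (h.mono fun _ hω => hω.1)),
    setIntegral_mono_ae_restrict hint (integrableOn_const (measure_ne_top _ _))
      (ae_restrict_of_ae (h.mono fun _ hω => hω.2))⟩

lemma prod_mem_Icc_pow_card {R : Type*} [CommSemiring R] [PartialOrder R] [IsOrderedRing R]
    {s : Finset ι} {f : ι → R} {a b : R} (ha : 0 ≤ a) (h : ∀ i ∈ s, f i ∈ Icc a b) :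
    ∏ i ∈ s, f i ∈ Icc (a ^ s.card) (b ^ s.card) := by
  rw [← Finset.prod_const, ← Finset.prod_const]
  exact ⟨Finset.prod_le_prod (fun _ _ => ha) fun i hi => (h i hi).1,
    Finset.prod_le_prod (fun i hi => ha.trans (h i hi).1) fun i hi => (h i hi).2⟩

variable [DecidableEq ι]

def extendByFalse (v : Finset ι) (g : v → Bool) : ι → Bool :=
  fun p => if h : p ∈ v then g ⟨p, h⟩ else false

lemma integral_eq_sum_measureReal_cylinder {X : ι → Ω → Bool} (hX : ∀ p, Measurable (X p))
    (v : Finset ι) {f : (ι → Bool) → ℝ} (hf : ∀ x y, (∀ p ∈ v, x p = y p) → f x = f y) :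
    ∫ ω, f (fun p => X p ω) ∂P =
      ∑ g : v → Bool,
        P.real {ω | ∀ p ∈ v, X p ω = extendByFalse v g p} * f (extendByFalse v g) := by
  set Y : Ω → v → Bool := fun ω q => X q ω
  have hY : Measurable Y := measurable_pi_lambda _ fun q => hX q
  have hfY : (fun ω => f fun p => X p ω) = fun ω => f (extendByFalse v (Y ω)) := by
    ext ω
    exact hf _ _ fun p hp => by simp [extendByFalse, hp, Y]
  have hpre (g : v → Bool) : Y ⁻¹' {g} = {ω | ∀ p ∈ v, X p ω = extendByFalse v g p} := by
    ext ω
    simp only [mem_preimage, mem_singleton_iff, funext_iff, Subtype.forall, mem_ofPred_eq]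
    exact forall₂_congr fun p hp => by rw [extendByFalse, dif_pos hp]
  rw [hfY, ← integral_map (f := fun g => f (extendByFalse v g)) hY.aemeasurable
      Measurable.of_discrete.aestronglyMeasurable,
    integral_fintype .of_finite]
  simp only [map_measureReal_apply hY (measurableSet_singleton _), hpre, smul_eq_mul]

end General

section Chain

variable {Ω I : Type*} {m0 : MeasurableSpace Ω} {X : I × ℤ → Ω → Bool}

abbrev past (X : I × ℤ → Ω → Bool) (t : ℤ) : MeasurableSpace Ω :=
  MeasurableSpace.comap (fun ω (p : {p : I × ℤ // p.2 ≤ t}) => X p.1 ω) MeasurableSpace.pi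

lemma measurable_past {p : I × ℤ} {t : ℤ} (hp : p.2 ≤ t) : Measurable[past X t] (X p) :=
  (measurable_pi_apply (⟨p, hp⟩ : {p : I × ℤ // p.2 ≤ t})).comp
    (comap_measurable fun ω (q : {p : I × ℤ // p.2 ≤ t}) => X q.1 ω)

lemma past_le (hX : ∀ p, Measurable (X p)) (t : ℤ) : past X t ≤ m0 :=
  (measurable_pi_lambda (fun ω (q : {p : I × ℤ // p.2 ≤ t}) => X q.1 ω) fun q => hX q.1).comap_le

variable {P : Measure Ω} [IsProbabilityMeasure P] {μ : ℝ}

lemma condProb_coord_mem_Icc (hX : ∀ p, Measurable (X p))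
    (hbound : ∀ i t, ∀ᵐ ω ∂P,
      condProb P (past X (t - 1)) {ω | X (i, t) ω = true} ω ∈ Icc μ (1 - μ))
    (i : I) (t : ℤ) (c : Bool) :
    ∀ᵐ ω ∂P, condProb P (past X (t - 1)) {ω | X (i, t) ω = c} ω ∈ Icc μ (1 - μ) := by
  cases c
  · have hcompl : {ω | X (i, t) ω = false} = {ω | X (i, t) ω = true}ᶜ := by ext; simp
    rw [hcompl]
    filter_upwards [condProb_compl (s := {ω | X (i, t) ω = true}) (past_le hX _)
      (hX _ (measurableSet_singleton true)), hbound i t] with ω hω hμ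
    rw [hω]
    exact ⟨by linarith [hμ.2], by linarith [hμ.1]⟩
  · exact hbound i t

lemma condProb_slice_mem_Icc (hX : ∀ p, Measurable (X p)) (hμ : 0 ≤ μ)
    (hindep : ∀ (t : ℤ) (J : Finset I) (b : I → Bool),
      condProb P (past X (t - 1)) {ω | ∀ j ∈ J, X (j, t) ω = b j} =ᵐ[P]
        fun ω => ∏ j ∈ J, condProb P (past X (t - 1)) {ω | X (j, t) ω = b j} ω)
    (hbound : ∀ i t, ∀ᵐ ω ∂P,
      condProb P (past X (t - 1)) {ω | X (i, t) ω = true} ω ∈ Icc μ (1 - μ))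
    {t : ℤ} {w : Finset (I × ℤ)} (hw : ∀ p ∈ w, p.2 = t) (b : I × ℤ → Bool) :
    ∀ᵐ ω ∂P, condProb P (past X (t - 1)) {ω | ∀ p ∈ w, X p ω = b p} ω ∈
      Icc (μ ^ w.card) ((1 - μ) ^ w.card) := by
  classical
  set J := w.image Prod.fst
  have hpt (p) (hp : p ∈ w) : (p.1, t) = p := Prod.ext rfl (hw p hp).symm
  have hcard : J.card = w.card :=
    Finset.card_image_of_injOn fun p hp q hq h => (hpt p hp).symm.trans (h ▸ hpt q hq)
  have hslice : {ω | ∀ p ∈ w, X p ω = b p} = {ω | ∀ j ∈ J, X (j, t) ω = b (j, t)} := by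
    ext ω
    simp only [mem_ofPred_eq, J, Finset.forall_mem_image]
    exact forall₂_congr fun p hp => by rw [hpt p hp]
  rw [hslice, ← hcard]
  filter_upwards [hindep t J fun j => b (j, t),
    (ae_ball_iff J.countable_toSet).2 fun j _ => condProb_coord_mem_Icc hX hbound j t (b (j, t))]
    with ω hω hJ
  rw [hω]
  exact prod_mem_Icc_pow_card hμ hJ

theorem measureReal_cylinder_mem_Icc (hX : ∀ p, Measurable (X p)) {a b : ℝ}
    (ha : 0 ≤ a) (hb : 0 ≤ b)
    (hslice : ∀ (t : ℤ) (w : Finset (I × ℤ)), (∀ p ∈ w, p.2 = t) → ∀ c : I × ℤ → Bool,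
      ∀ᵐ ω ∂P, condProb P (past X (t - 1)) {ω | ∀ p ∈ w, X p ω = c p} ω ∈
        Icc (a ^ w.card) (b ^ w.card))
    (c : I × ℤ → Bool) (v : Finset (I × ℤ)) :
    P.real {ω | ∀ p ∈ v, X p ω = c p} ∈ Icc (a ^ v.card) (b ^ v.card) := by
  classical
  induction v using Finset.strongInduction with | _ v ih => ?_
  rcases v.eq_empty_or_nonempty with rfl | hne
  · simp
  set t := (v.image Prod.snd).max' (hne.image _)
  have hle (p) (hp : p ∈ v) : p.2 ≤ t := Finset.le_max' _ _ (Finset.mem_image_of_mem _ hp)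
  obtain ⟨p₀, hp₀, hp₀t⟩ := Finset.mem_image.1 ((v.image Prod.snd).max'_mem (hne.image _))
  set w := v.filter (·.2 = t)
  set u := v.filter (¬ ·.2 = t)
  have hu : u ⊂ v := Finset.filter_ssubset.2 ⟨p₀, hp₀, not_not.2 hp₀t⟩
  have hcard : u.card + w.card = v.card := by
    rw [add_comm]; exact Finset.card_filter_add_card_filter_not _
  have hsplit : {ω | ∀ p ∈ v, X p ω = c p} =
      {ω | ∀ p ∈ u, X p ω = c p} ∩ {ω | ∀ p ∈ w, X p ω = c p} := by
    ext ω
    rw [← Finset.filter_union_filter_not_eq (·.2 = t) v]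
    simp only [mem_ofPred_eq, mem_inter_iff, Finset.forall_mem_union, u, w]
    exact and_comm
  have hu_past : MeasurableSet[past X (t - 1)] {ω | ∀ p ∈ u, X p ω = c p} :=
    measurableSet_cylinder u (fun p hp => by
      obtain ⟨hpv, hpt⟩ := Finset.mem_filter.1 hp
      exact measurable_past (Int.le_sub_one_of_lt ((hle p hpv).lt_of_ne hpt))) c
  have hinter := measureReal_inter_mem_Icc_of_condProb (past_le hX _) hu_past
    (measurableSet_cylinder w (fun p _ => hX p) c)
    (hslice t w (fun p hp => (Finset.mem_filter.1 hp).2) c)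
  obtain ⟨ih_lower, ih_upper⟩ := ih u hu
  rw [hsplit, ← hcard, pow_add, pow_add]
  constructor
  · calc a ^ u.card * a ^ w.card ≤ a ^ w.card * P.real {ω | ∀ p ∈ u, X p ω = c p} := by
          rw [mul_comm]; gcongr
      _ ≤ _ := hinter.1
  · calc _ ≤ b ^ w.card * P.real {ω | ∀ p ∈ u, X p ω = c p} := hinter.2
      _ ≤ b ^ u.card * b ^ w.card := by rw [mul_comm]; gcongr

end Chain

theorem stmt13_general {Ω I : Type*} [DecidableEq I] {m0 : MeasurableSpace Ω}
    (P : Measure Ω) [IsProbabilityMeasure P]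
    (X : I × ℤ → Ω → Bool) (hX : ∀ p, Measurable (X p))
    (μ : ℝ) (hμ0 : 0 < μ) (hμ2 : μ ≤ 1 / 2)
    (𝓕 : ℤ → MeasurableSpace Ω)
    (h𝓕 : ∀ t, 𝓕 t =
      MeasurableSpace.comap (fun ω (p : { p : I × ℤ // p.2 ≤ t }) => X p.1 ω)
        MeasurableSpace.pi)
    (hcondindep : ∀ (t : ℤ) (J : Finset I) (f : I → Bool),
      (P[Set.indicator {ω | ∀ j ∈ J, X (j, t) ω = f j} (fun _ => (1 : ℝ)) | 𝓕 (t - 1)])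
        =ᵐ[P] fun ω =>
          ∏ j ∈ J, (P[Set.indicator {ω | X (j, t) ω = f j} (fun _ => (1 : ℝ)) | 𝓕 (t - 1)]) ω)
    (hbound : ∀ (i : I) (t : ℤ), ∀ᵐ ω ∂P,
      μ ≤ (P[Set.indicator {ω | X (i, t) ω = true} (fun _ => (1 : ℝ)) | 𝓕 (t - 1)]) ω ∧
      (P[Set.indicator {ω | X (i, t) ω = true} (fun _ => (1 : ℝ)) | 𝓕 (t - 1)]) ω ≤ 1 - μ) :
    ∀ (v : Finset (I × ℤ)) (f : ((I × ℤ) → Bool) → ℝ),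
      (∀ x, 0 ≤ f x) →
      (∀ x y : (I × ℤ) → Bool, (∀ p ∈ v, x p = y p) → f x = f y) →
      (2 * μ) ^ v.card *
          ((1 / 2 : ℝ) ^ v.card *
            ∑ g : (↥v → Bool), f (fun p => if h : p ∈ v then g ⟨p, h⟩ else false))
        ≤ ∫ ω, f (fun p => X p ω) ∂P ∧
      ∫ ω, f (fun p => X p ω) ∂P
        ≤ (2 * (1 - μ)) ^ v.card *
            ((1 / 2 : ℝ) ^ v.card *
              ∑ g : (↥v → Bool), f (fun p => if h : p ∈ v then g ⟨p, h⟩ else false)) := by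
  intro v f hf0 hf
  obtain rfl : 𝓕 = past X := funext h𝓕
  have hcyl := measureReal_cylinder_mem_Icc hX hμ0.le (by linarith : (0 : ℝ) ≤ 1 - μ)
    fun t w hw c => condProb_slice_mem_Icc hX hμ0.le hcondindep hbound hw c
  have hscale (c S : ℝ) : (2 * c) ^ v.card * ((1 / 2) ^ v.card * S) = c ^ v.card * S := by
    rw [← mul_assoc, ← mul_pow]; congr 2; ring
  rw [integral_eq_sum_measureReal_cylinder hX v hf, hscale, hscale, Finset.mul_sum,
    Finset.mul_sum]
  exact ⟨Finset.sum_le_sum fun g _ => mul_le_mul_of_nonneg_right (hcyl _ v).1 (hf0 _),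
    Finset.sum_le_sum fun g _ => mul_le_mul_of_nonneg_right (hcyl _ v).2 (hf0 _)⟩

/-- Change-of-measure lemma (Lemma 4): for a chain on `{0,1}^{I×ℤ}` whose coordinates,
given the past, are conditionally independent with conditional spiking probabilities in
`[μ, 1-μ]`, the expectation of any nonnegative cylindrical function `f` of `X_v` is
sandwiched between `(2μ)^{|v|}` and `(2(1-μ))^{|v|}` times its expectation under the
i.i.d. Bernoulli(1/2) measure. -/
theorem stmt13 {Ω I : Type*} [Countable I] [DecidableEq I] {m0 : MeasurableSpace Ω}
    (P : Measure Ω) [IsProbabilityMeasure P]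
    (X : I × ℤ → Ω → Bool) (hX : ∀ p, Measurable (X p))
    (μ : ℝ) (hμ0 : 0 < μ) (hμ2 : μ ≤ 1 / 2)
    (𝓕 : ℤ → MeasurableSpace Ω)
    (h𝓕 : ∀ t, 𝓕 t =
      MeasurableSpace.comap (fun ω (p : { p : I × ℤ // p.2 ≤ t }) => X p.1 ω)
        MeasurableSpace.pi)
    (hcondindep : ∀ (t : ℤ) (J : Finset I) (f : I → Bool),
      (P[Set.indicator {ω | ∀ j ∈ J, X (j, t) ω = f j} (fun _ => (1 : ℝ)) | 𝓕 (t - 1)])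
        =ᵐ[P] fun ω =>
          ∏ j ∈ J, (P[Set.indicator {ω | X (j, t) ω = f j} (fun _ => (1 : ℝ)) | 𝓕 (t - 1)]) ω)
    (hbound : ∀ (i : I) (t : ℤ), ∀ᵐ ω ∂P,
      μ ≤ (P[Set.indicator {ω | X (i, t) ω = true} (fun _ => (1 : ℝ)) | 𝓕 (t - 1)]) ω ∧
      (P[Set.indicator {ω | X (i, t) ω = true} (fun _ => (1 : ℝ)) | 𝓕 (t - 1)]) ω ≤ 1 - μ) :
    ∀ (v : Finset (I × ℤ)) (f : ((I × ℤ) → Bool) → ℝ),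
      (∀ x, 0 ≤ f x) →
      (∀ x y : (I × ℤ) → Bool, (∀ p ∈ v, x p = y p) → f x = f y) →
      (2 * μ) ^ v.card *
          ((1 / 2 : ℝ) ^ v.card *
            ∑ g : (↥v → Bool), f (fun p => if h : p ∈ v then g ⟨p, h⟩ else false))
        ≤ ∫ ω, f (fun p => X p ω) ∂P ∧
      ∫ ω, f (fun p => X p ω) ∂P
        ≤ (2 * (1 - μ)) ^ v.card *
            ((1 / 2 : ℝ) ^ v.card *
              ∑ g : (↥v → Bool), f (fun p => if h : p ∈ v then g ⟨p, h⟩ else false)) :=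
  stmt13_general (m0 := m0) P X hX μ hμ0 hμ2 𝓕 h𝓕 hcondindep hbound
end

section
/- Let $n \ge 1$, $0 < \mu \le 1/2$, $c > 0$, $s \ge 1$, $R \ge 0$, and let $G$ be a symmetric $n \times n$ matrix satisfying $G_{\varphi\varphi} \ge \mu - R$ for all $\varphi$, $G_{\varphi\varphi'} \ge \mu^2 - R$ and $G_{\varphi\varphi'} \le (1-\mu)^2 + R$ for all $\varphi \ne \varphi'$. Assume $\mu^2 \geq R$. Then for every index set $J$ with $|J| \le s$ and every $a \in \mathbb{R}^n$ with $|a_{J^c}|_1 \le c|a_J|_1$, one has $a^\top G a \ge \left[(\mu - \mu^2) - ((1 - 2\mu) + R)(1+c)^2 s\right] \|a_J\|^2$. -/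
open Matrix Finset

/-!
Splitting every off-diagonal entry of `G` as `μ² + (G i j - μ²)` with `|G i j - μ²| ≤ 1 - 2μ + R`
gives `aᵀ G a ≥ μ² (∑ a)² - (1 - 2μ + R) |a|₁² + (1 - μ - μ²) ‖a‖²`. On the cone
`|a_{Jᶜ}|₁ ≤ c |a_J|₁` Cauchy–Schwarz bounds `|a|₁² ≤ (1 + c)² |J| ‖a_J‖²`, while
`(1 - μ - μ²) ‖a‖² ≥ (μ - μ²) ‖a_J‖²` because `μ ≤ 1/2`.
-/

section

variable {ι : Type*} [DecidableEq ι] {G : Matrix ι ι ℝ} {m K d : ℝ}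

theorem le_mul_entry_mul_of_entry_bounds (hdiag : ∀ i, d ≤ G i i)
    (hoff : ∀ i j, i ≠ j → |G i j - m| ≤ K) (a : ι → ℝ) (i j : ι) :
    m * (a i * a j) - K * (|a i| * |a j|) + (if i = j then (d - m + K) * a i ^ 2 else 0)
      ≤ a i * (G i j * a j) := by
  by_cases hij : i = j
  · subst hij
    have := mul_le_mul_of_nonneg_left (hdiag i) (sq_nonneg (a i))
    simp only [if_pos, abs_mul_abs_self]
    nlinarith
  · have hdev : -(|a i * a j| * K) ≤ a i * a j * (G i j - m) :=
      calc -(|a i * a j| * K) ≤ -(|a i * a j| * |G i j - m|) := by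
            gcongr; exact hoff i j hij
        _ = -|a i * a j * (G i j - m)| := by rw [abs_mul (a i * a j)]
        _ ≤ a i * a j * (G i j - m) := neg_abs_le _
    simp only [if_neg hij, add_zero, ← abs_mul]
    linarith

variable [Fintype ι]

theorem sq_sum_abs_le_of_cone {c : ℝ} (J : Finset ι) (a : ι → ℝ)
    (hcone : ∑ i ∈ Jᶜ, |a i| ≤ c * ∑ i ∈ J, |a i|) :
    (∑ i, |a i|) ^ 2 ≤ (1 + c) ^ 2 * (#J * ∑ i ∈ J, a i ^ 2) := by
  have hsplit : ∑ i ∈ J, |a i| + ∑ i ∈ Jᶜ, |a i| = ∑ i, |a i| := sum_add_sum_compl J _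
  have hl1 : ∑ i, |a i| ≤ (1 + c) * ∑ i ∈ J, |a i| := by linarith
  have hCS : (∑ i ∈ J, |a i|) ^ 2 ≤ #J * ∑ i ∈ J, a i ^ 2 := by
    simpa only [sq_abs] using sq_sum_le_card_mul_sum_sq (s := J) (f := fun i => |a i|)
  calc (∑ i, |a i|) ^ 2 ≤ ((1 + c) * ∑ i ∈ J, |a i|) ^ 2 :=
        pow_le_pow_left₀ (sum_nonneg fun i _ => abs_nonneg _) hl1 2
    _ = (1 + c) ^ 2 * (∑ i ∈ J, |a i|) ^ 2 := mul_pow _ _ _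
    _ ≤ (1 + c) ^ 2 * (#J * ∑ i ∈ J, a i ^ 2) := by gcongr

theorem le_dotProduct_mulVec_of_entry_bounds (hdiag : ∀ i, d ≤ G i i)
    (hoff : ∀ i j, i ≠ j → |G i j - m| ≤ K) (a : ι → ℝ) :
    m * (∑ i, a i) ^ 2 - K * (∑ i, |a i|) ^ 2 + (d - m + K) * ∑ i, a i ^ 2
      ≤ a ⬝ᵥ (G *ᵥ a) :=
  calc m * (∑ i, a i) ^ 2 - K * (∑ i, |a i|) ^ 2 + (d - m + K) * ∑ i, a i ^ 2
      = ∑ i, ∑ j, (m * (a i * a j) - K * (|a i| * |a j|)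
          + (if i = j then (d - m + K) * a i ^ 2 else 0)) := by
        simp only [sum_add_distrib, sum_sub_distrib, ← mul_sum, sum_ite_eq, mem_univ,
          if_true, sq, sum_mul_sum]
    _ ≤ ∑ i, ∑ j, a i * (G i j * a j) :=
        sum_le_sum fun i _ => sum_le_sum fun j _ =>
          le_mul_entry_mul_of_entry_bounds hdiag hoff a i j
    _ = a ⬝ᵥ (G *ᵥ a) := by simp only [dotProduct, mulVec, mul_sum]

end

theorem stmt15_general {n : ℕ} (μ c R : ℝ) (s : ℕ)
    (hμ0 : 0 < μ) (hμ : μ ≤ 1 / 2)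
    (hR : 0 ≤ R)
    (G : Matrix (Fin n) (Fin n) ℝ)
    (hdiag : ∀ i, μ - R ≤ G i i)
    (hlow : ∀ i j, i ≠ j → μ ^ 2 - R ≤ G i j)
    (hhigh : ∀ i j, i ≠ j → G i j ≤ (1 - μ) ^ 2 + R) :
    ∀ J : Finset (Fin n), J.card ≤ s → ∀ a : Fin n → ℝ,
      (∑ i ∈ Jᶜ, |a i|) ≤ c * ∑ i ∈ J, |a i| →
      ((μ - μ ^ 2) - ((1 - 2 * μ) + R) * (1 + c) ^ 2 * s) * ∑ i ∈ J, (a i) ^ 2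
        ≤ a ⬝ᵥ (G *ᵥ a) := by
  intro J hJ a hcone
  have hoff : ∀ i j, i ≠ j → |G i j - μ ^ 2| ≤ (1 - 2 * μ) + R := fun i j hij =>
    abs_le.2 ⟨by linarith [hlow i j hij], by linarith [hhigh i j hij]⟩
  have hquad := le_dotProduct_mulVec_of_entry_bounds hdiag hoff a
  have hl1 := sq_sum_abs_le_of_cone J a hcone
  have hJ0 : 0 ≤ ∑ i ∈ J, a i ^ 2 := sum_nonneg fun i _ => sq_nonneg _
  have hJuniv : ∑ i ∈ J, a i ^ 2 ≤ ∑ i, a i ^ 2 :=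
    sum_le_univ_sum_of_nonneg fun i => sq_nonneg _
  have hK : 0 ≤ (1 - 2 * μ) + R := by linarith
  have hl1K : (1 - 2 * μ + R) * (∑ i, |a i|) ^ 2
      ≤ (1 - 2 * μ + R) * ((1 + c) ^ 2 * (s * ∑ i ∈ J, a i ^ 2)) := by
    gcongr
    exact hl1.trans (by gcongr)
  have hdiagTerm : (μ - μ ^ 2) * ∑ i ∈ J, a i ^ 2 ≤ (1 - μ - μ ^ 2) * ∑ i, a i ^ 2 :=
    mul_le_mul (by linarith) hJuniv hJ0 (by nlinarith)
  linarith [mul_nonneg (sq_nonneg μ) (sq_nonneg (∑ i, a i))]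

/-- Deterministic heart of the restricted eigenvalue property for the Hawkes dictionary. -/
theorem stmt15 {n : ℕ} (hn : 1 ≤ n) (μ c R : ℝ) (s : ℕ)
    (hμ0 : 0 < μ) (hμ : μ ≤ 1 / 2) (hc : 0 < c) (hs : 1 ≤ s)
    (hR : 0 ≤ R) (hμR : R ≤ μ ^ 2)
    (G : Matrix (Fin n) (Fin n) ℝ) (hGsym : G.IsSymm)
    (hdiag : ∀ i, μ - R ≤ G i i)
    (hlow : ∀ i j, i ≠ j → μ ^ 2 - R ≤ G i j)
    (hhigh : ∀ i j, i ≠ j → G i j ≤ (1 - μ) ^ 2 + R) :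
    ∀ J : Finset (Fin n), J.card ≤ s → ∀ a : Fin n → ℝ,
      (∑ i ∈ Jᶜ, |a i|) ≤ c * ∑ i ∈ J, |a i| →
      ((μ - μ ^ 2) - ((1 - 2 * μ) + R) * (1 + c) ^ 2 * s) * ∑ i ∈ J, (a i) ^ 2
        ≤ a ⬝ᵥ (G *ᵥ a) :=
  stmt15_general μ c R s hμ0 hμ hR G hdiag hlow hhigh
end
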